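/- arXiv:cs/0212004 — 9 statements merged into one kernel-verified Lean document; each statement's English description precedes it below -/
import Mathlib

section
/- Let (V, E) be a finite hypergraph (V a finite set of vertices, E a set of subsets of V), and let A, B ⊆ V. Then there exists a maximal independent set M of (V, E) with A ⊆ M and M ∩ B = ∅ if and only if there exists a family of edges (E_b)_{b ∈ B} with b ∈ E_b for every b ∈ B such that the set A ∪ ⋃_{b ∈ B} (E_b \ {b}) is independent. (This is the correctness claim underlying the polynomial-time algorithm showing that consistent answers to quantifier-free queries under denial constraints can be computed in PTIME.) -/
/-- A hypergraph `(V, E)` (with `E` a set of subsets of `V`), sets `A, B ⊆ V`.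
There is a maximal independent set `M` with `A ⊆ M` and `M ∩ B = ∅` iff there is a
family of edges `(E_b)_{b ∈ B}` with `b ∈ E_b` such that
`A ∪ ⋃_{b ∈ B} (E_b \ {b})` is independent. -/
theorem stmt_0 {α : Type*} [DecidableEq α] (V : Finset α) (E : Set (Finset α))
    (hE : ∀ e ∈ E, e ⊆ V) (A B : Finset α) (hA : A ⊆ V) (hB : B ⊆ V) :
    (∃ M : Finset α, M ⊆ V ∧ (∀ e ∈ E, ¬ e ⊆ M) ∧
        (∀ M' : Finset α, M' ⊆ V → (∀ e ∈ E, ¬ e ⊆ M') → M ⊆ M' → M' = M) ∧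
        A ⊆ M ∧ ∀ b ∈ B, b ∉ M) ↔
      (∃ f : α → Finset α, (∀ b ∈ B, f b ∈ E ∧ b ∈ f b) ∧
        ∀ e ∈ E, ¬ e ⊆ A ∪ B.biUnion fun b => f b \ {b}) := by
  classical
  constructor
  · rintro ⟨M, hMV, hMind, hMmax, hAM, hBM⟩
    have key : ∀ b, ∃ e, b ∈ B → (e ∈ E ∧ e ⊆ M ∪ {b} ∧ b ∈ e) := by
      intro b
      by_cases hb : b ∈ B
      · by_contra h
        push_neg at h
        have hind : ∀ e ∈ E, ¬ e ⊆ M ∪ {b} := by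
          intro e he hsub
          by_cases hbe : b ∈ e
          · exact ((h e).2 he hsub hbe).elim
          · exact hMind e he (fun x hx => (Finset.mem_union.1 (hsub hx)).resolve_right
              (by simp only [Finset.mem_singleton]; rintro rfl; exact hbe hx))
        have heq := hMmax (M ∪ {b}) (Finset.union_subset hMV (by simp [hB hb])) hind
          Finset.subset_union_left
        have hbM : b ∈ M := heq ▸ (by simp)
        exact hBM b hb hbM
      · exact ⟨∅, fun h => absurd h hb⟩
    choose f hf using key
    refine ⟨f, fun b hb => ⟨(hf b hb).1, (hf b hb).2.2⟩, ?_⟩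
    intro e he hsub
    refine hMind e he (fun x hx => ?_)
    rcases Finset.mem_union.1 (hsub hx) with h | h
    · exact hAM h
    · rcases Finset.mem_biUnion.1 h with ⟨b, hb, hx'⟩
      rcases Finset.mem_sdiff.1 hx' with ⟨hx1, hx2⟩
      rcases Finset.mem_union.1 ((hf b hb).2.1 hx1) with h' | h'
      · exact h'
      · exact absurd h' hx2
  · rintro ⟨f, hf, hind⟩
    set S : Finset α := A ∪ B.biUnion fun b => f b \ {b} with hS
    have hSV : S ⊆ V := by
      apply Finset.union_subset hA
      intro x hx
      rcases Finset.mem_biUnion.1 hx with ⟨b, hb, hx'⟩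
      exact hE (f b) (hf b hb).1 (Finset.mem_sdiff.1 hx').1
    have hSB : ∀ b ∈ B, b ∉ S := by
      intro b hb hbS
      apply hind (f b) (hf b hb).1
      intro x hx
      by_cases hxb : x = b
      · exact hxb ▸ hbS
      · exact Finset.mem_union_right _ (Finset.mem_biUnion.2
          ⟨b, hb, Finset.mem_sdiff.2 ⟨hx, by simp [hxb]⟩⟩)
    -- the family of candidate sets
    let ok : Finset α → Prop := fun M =>
      S ⊆ M ∧ M ⊆ V ∧ (∀ b ∈ B, b ∉ M) ∧ ∀ e ∈ E, ¬ e ⊆ M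
    let s : Finset (Finset α) := V.powerset.filter ok
    have hSs : S ∈ s := by
      simp only [s, Finset.mem_filter, Finset.mem_powerset]
      exact ⟨hSV, Finset.Subset.refl _, hSV, hSB, hind⟩
    obtain ⟨M, hMs, hMmax⟩ := s.exists_max_image Finset.card ⟨S, hSs⟩
    simp only [s, Finset.mem_filter, Finset.mem_powerset] at hMs
    obtain ⟨hMV, hSM, _, hBM, hMind⟩ := hMs
    refine ⟨M, hMV, hMind, ?_, (Finset.union_subset_iff.1 hSM).1, hBM⟩
    intro M' hM'V hM'ind hMM'
    have hBM' : ∀ b ∈ B, b ∉ M' := by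
      intro b hb hbM'
      apply hM'ind (f b) (hf b hb).1
      intro x hx
      by_cases hxb : x = b
      · exact hxb ▸ hbM'
      · exact hMM' (hSM (Finset.mem_union_right _ (Finset.mem_biUnion.2
          ⟨b, hb, Finset.mem_sdiff.2 ⟨hx, by simp [hxb]⟩⟩)))
    have hM's : M' ∈ s := by
      simp only [s, Finset.mem_filter, Finset.mem_powerset]
      exact ⟨hM'V, hSM.trans hMM', hM'V, hBM', hM'ind⟩
    exact (Finset.eq_of_subset_of_card_le hMM' (hMmax M' hM's)).symm
end

section
/- Let Φ be a monotone CNF formula: a finite family of nonempty finite clauses, indexed by a finite set I, each clause being a set of propositional variables marked either positive (all its variables occur positively) or negative (all its variables occur negatively). Let c and c' be two distinct constants and define the instance r_Φ of a ternary relation R to contain the tuple (i, p, c) for each negative clause with index i and each variable p in it, and the tuple (i, p, c') for each positive clause with index i and each variable p in it. Then Φ is satisfiable (there is an assignment σ of truth values to variables such that every positive clause contains a variable with σ(p) = true and every negative clause contains a variable with σ(p) = false) if and only if there exists a repair S of r_Φ with respect to the key functional dependency A → BC such that there are no x, y, z with (x, y, c) ∈ S and (z, y, c') ∈ S, i.e.,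 a repair in which the conjunctive query ∃x,y,z (R(x,y,c) ∧ R(z,y,c')) is false. (This is the reduction from MONOTONE 3-SAT proving that consistent query answering for one key FD and a nonsimple conjunctive query is co-NP-hard.) -/
/-- The instance `r_Φ` of the MONOTONE 3-SAT reduction: tuples `(i, p, c)` for each
negative clause `i` and variable `p` in it, `(i, p, c')` for each positive clause `i`
and variable `p` in it. -/
def monotoneInstance {ι ν γ : Type*} (clause : ι → Finset ν) (pos : ι → Prop)
    (c c' : γ) : Set (ι × ν × γ) :=
  {t | t.2.1 ∈ clause t.1 ∧ ((pos t.1 ∧ t.2.2 = c') ∨ (¬ pos t.1 ∧ t.2.2 = c))}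

/-- A monotone CNF formula (each clause nonempty, all its variable occurrences positive or
all negative) is satisfiable iff the instance `r_Φ` has a repair, with respect to the key
FD `A → BC`, in which the query `∃x,y,z (R(x,y,c) ∧ R(z,y,c'))` is false. -/
theorem stmt_2 {ι ν γ : Type*} [Fintype ι] (clause : ι → Finset ν) (pos : ι → Prop)
    (hne : ∀ i, (clause i).Nonempty) (c c' : γ) (hcc : c ≠ c') :
    (∃ σ : ν → Bool, ∀ i,
        (pos i → ∃ p ∈ clause i, σ p = true) ∧ (¬ pos i → ∃ p ∈ clause i, σ p = false)) ↔
      ∃ S : Set (ι × ν × γ),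
        S ⊆ monotoneInstance clause pos c c' ∧
        (∀ t ∈ S, ∀ t' ∈ S, t.1 = t'.1 → t = t') ∧
        (∀ S' : Set (ι × ν × γ), S' ⊆ monotoneInstance clause pos c c' →
          (∀ t ∈ S', ∀ t' ∈ S', t.1 = t'.1 → t = t') → S ⊆ S' → S' = S) ∧
        ¬ ∃ x y z, (x, y, c) ∈ S ∧ (z, y, c') ∈ S := by
  classical
  constructor
  · rintro ⟨σ, hσ⟩
    choose p₁ hp₁ hσ₁ using fun i (h : pos i) => (hσ i).1 h
    choose p₂ hp₂ hσ₂ using fun i (h : ¬ pos i) => (hσ i).2 h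
    set f : ι → ν × γ := fun i => if h : pos i then (p₁ i h, c') else (p₂ i h, c) with hf
    refine ⟨{t | t.2 = f t.1}, ?_, ?_, ?_, ?_⟩
    · rintro ⟨i, pv⟩ ht
      simp only [Set.mem_setOf_eq] at ht
      subst ht
      by_cases h : pos i
      · exact ⟨by simp [hf, h, hp₁], Or.inl ⟨h, by simp [hf, h]⟩⟩
      · exact ⟨by simp [hf, h, hp₂], Or.inr ⟨h, by simp [hf, h]⟩⟩
    · rintro ⟨i, pv⟩ ht ⟨i', pv'⟩ ht' (h : i = i')
      simp only [Set.mem_setOf_eq] at ht ht'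
      subst h; simp_all
    · intro S' hsub' hkey' hSS'
      apply Set.Subset.antisymm _ hSS'
      rintro ⟨i, pv⟩ ht
      have hfi : ((i, f i) : ι × ν × γ) ∈ S' := hSS' rfl
      have := hkey' _ ht _ hfi rfl
      rw [this]
      exact rfl
    · rintro ⟨x, y, z, h1, h2⟩
      simp only [Set.mem_setOf_eq] at h1 h2
      by_cases hx : pos x
      · simp only [hf, hx, dif_pos] at h1
        exact hcc (congrArg Prod.snd h1)
      · by_cases hz : pos z
        · simp only [hf, hx, hz, dif_pos, dif_neg, not_false_iff] at h1 h2
          have e1 : y = p₂ x hx := congrArg Prod.fst h1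
          have e2 : y = p₁ z hz := congrArg Prod.fst h2
          have := hσ₂ x hx
          rw [← e1] at this
          have := hσ₁ z hz
          rw [← e2] at this
          simp_all
        · simp only [hf, hz, dif_neg, not_false_iff] at h2
          exact hcc (congrArg Prod.snd h2).symm
  · rintro ⟨S, hsub, hkey, hmax, hq⟩
    have htot : ∀ i, ∃ pv : ν × γ, (i, pv) ∈ S := by
      intro i
      by_contra h
      push_neg at h
      obtain ⟨p, hp⟩ := hne i
      set v : γ := if pos i then c' else c with hv
      have ht : ((i, p, v) : ι × ν × γ) ∈ monotoneInstance clause pos c c' := by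
        refine ⟨hp, ?_⟩
        by_cases hpi : pos i
        · exact Or.inl ⟨hpi, if_pos hpi⟩
        · exact Or.inr ⟨hpi, if_neg hpi⟩
      have hkey' : ∀ t ∈ S ∪ {(i, p, v)}, ∀ t' ∈ S ∪ {(i, p, v)}, t.1 = t'.1 → t = t' := by
        rintro t (ht1 | ht1) t' (ht1' | ht1') he
        · exact hkey t ht1 t' ht1' he
        · simp only [Set.mem_singleton_iff] at ht1'
          subst ht1'
          exact absurd (by rwa [show t = (i, t.2) from Prod.ext he rfl] at ht1) (h t.2)
        · simp only [Set.mem_singleton_iff] at ht1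
          subst ht1
          exact absurd (by rwa [show t' = (i, t'.2) from Prod.ext he.symm rfl] at ht1') (h t'.2)
        · simp only [Set.mem_singleton_iff] at ht1 ht1'; rw [ht1, ht1']
      have heq := hmax (S ∪ {(i, p, v)})
        (Set.union_subset hsub (by simpa using ht)) hkey' Set.subset_union_left
      have : ((i, p, v) : ι × ν × γ) ∈ S := heq ▸ Set.mem_union_right _ rfl
      exact h _ this
    refine ⟨fun p => if ∃ j, (j, p, c') ∈ S then true else false, fun i => ?_⟩
    obtain ⟨⟨p, v⟩, hpv⟩ := htot i
    obtain ⟨hp, hcase⟩ := hsub hpv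
    constructor
    · intro hpi
      rcases hcase with ⟨_, hv⟩ | ⟨hni, _⟩
      · subst hv
        exact ⟨p, hp, if_pos ⟨i, hpv⟩⟩
      · exact absurd hpi hni
    · intro hni
      rcases hcase with ⟨hpi, _⟩ | ⟨_, hv⟩
      · exact absurd hpi hni
      · subst hv
        refine ⟨p, hp, if_neg ?_⟩
        rintro ⟨j, hj⟩
        exact hq ⟨i, p, j, hpv, hj⟩
end

section
/- Let 𝒢 = ⟨V, E, B, G⟩ be a finite bipartite edge-colored graph and let g and b be two distinct constants. Define the instance r_𝒢 of a ternary relation R to consist of the tuples (x, y, g) for each green edge (x, y) ∈ G and (x, y, b) for each blue edge (x, y) ∈ B. Then there exists a repair S of r_𝒢 with respect to the two key functional dependencies A → BC and B → AC such that S contains no tuple of the form (x, y, b) — i.e., a repair in which the query ∃x,y R(x,y,b) is false — if and only if 𝒢 has the max-V-free property. (This is the core of the theorem that consistent query answering is co-NP-complete for two key dependencies and a single-atom conjunctive query.) -/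
/-- A set `M` of edges of a bipartite graph (pairs (left vertex, right vertex)) is
"V-free" if no two of its edges share a left endpoint or a right endpoint. -/
def IsVMatching {L R : Type*} (M : Set (L × R)) : Prop :=
  ∀ e ∈ M, ∀ e' ∈ M, (e.1 = e'.1 ∨ e.2 = e'.2) → e = e'

/-- The bipartite edge-colored graph with edge set `E` and blue edges `B ⊆ E` has the
max-V-free property: there is `M ⊆ E` which is V-free, maximal under inclusion among
V-free subsets of `E`, and disjoint from `B`. -/
def MaxVFree {L R : Type*} (E B : Set (L × R)) : Prop :=
  ∃ M ⊆ E, IsVMatching M ∧ M ∩ B = ∅ ∧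
    ∀ M' ⊆ E, IsVMatching M' → M ⊆ M' → M' = M

/-- The instance `r_𝒢`: tuples `(x, y, g)` for each green edge `(x, y)` and
`(x, y, b)` for each blue edge `(x, y)`. -/
def ecInstance {L R γ : Type*} (B G : Set (L × R)) (g b : γ) : Set (L × R × γ) :=
  {t | ((t.1, t.2.1) ∈ G ∧ t.2.2 = g) ∨ ((t.1, t.2.1) ∈ B ∧ t.2.2 = b)}

/-- For a finite bipartite edge-colored graph `⟨V, E, B, G⟩` there is a repair of `r_𝒢`
with respect to the two key FDs `A → BC` and `B → AC` in which the query
`∃x,y R(x,y,b)` is false iff the graph has the max-V-free property. -/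
theorem stmt_4 {L R γ : Type*} (E B G : Set (L × R)) (hE : E.Finite)
    (hpart : E = B ∪ G) (hdisj : B ∩ G = ∅) (g b : γ) (hgb : g ≠ b) :
    (∃ S : Set (L × R × γ),
        S ⊆ ecInstance B G g b ∧
        (∀ t ∈ S, ∀ t' ∈ S, t.1 = t'.1 → t = t') ∧
        (∀ t ∈ S, ∀ t' ∈ S, t.2.1 = t'.2.1 → t = t') ∧
        (∀ S' : Set (L × R × γ), S' ⊆ ecInstance B G g b →
          (∀ t ∈ S', ∀ t' ∈ S', t.1 = t'.1 → t = t') →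
          (∀ t ∈ S', ∀ t' ∈ S', t.2.1 = t'.2.1 → t = t') → S ⊆ S' → S' = S) ∧
        ¬ ∃ x y, (x, y, b) ∈ S) ↔
      MaxVFree E B := by
  have hnBG : ∀ e : L × R, e ∈ B → e ∈ G → False := by
    intro e hB hG
    have : e ∈ B ∩ G := ⟨hB, hG⟩
    rw [hdisj] at this
    exact this
  constructor
  · rintro ⟨S, hSsub, hk1, hk2, hmax, hnob⟩
    -- every tuple of S is green
    have hform : ∀ t ∈ S, (t.1, t.2.1) ∈ G ∧ t = (t.1, t.2.1, g) := by
      intro t ht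
      rcases hSsub ht with ⟨hG, hc⟩ | ⟨hB, hc⟩
      · exact ⟨hG, by ext <;> simp [hc]⟩
      · exfalso
        apply hnob
        refine ⟨t.1, t.2.1, ?_⟩
        have : t = (t.1, t.2.1, b) := by ext <;> simp [hc]
        rwa [this] at ht
    refine ⟨{e : L × R | (e.1, e.2, g) ∈ S}, ?_, ?_, ?_, ?_⟩
    · intro e he
      have := (hform _ he).1
      rw [hpart]; exact Or.inr this
    · intro e he e' he' hshare
      have h : ((e.1, e.2, g) : L × R × γ) = (e'.1, e'.2, g) := by
        rcases hshare with h | h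
        · exact hk1 _ he _ he' h
        · exact hk2 _ he _ he' h
      have h' := Prod.ext_iff.mp h
      exact Prod.ext h'.1 (Prod.ext_iff.mp h'.2).1
    · ext e
      simp only [Set.mem_inter_iff, Set.mem_setOf_eq, Set.mem_empty_iff_false, iff_false,
        not_and]
      intro he hB
      exact hnBG e hB (hform _ he).1
    · intro M' hM'E hM'V hMM'
      set S' : Set (L × R × γ) := {t | t ∈ ecInstance B G g b ∧ (t.1, t.2.1) ∈ M'} with hS'def
      have hS'sub : S' ⊆ ecInstance B G g b := fun t ht => ht.1
      have hsamedge : ∀ t ∈ S', ∀ t' ∈ S', (t.1, t.2.1) = (t'.1, t'.2.1) → t = t' := by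
        intro t ht t' ht' hedge
        rw [Prod.mk.injEq] at hedge
        rcases ht.1 with ⟨hG1, hc1⟩ | ⟨hB1, hc1⟩ <;> rcases ht'.1 with ⟨hG2, hc2⟩ | ⟨hB2, hc2⟩
        · have : t = (t.1, t.2.1, g) := by ext <;> simp [hc1]
          have h' : t' = (t'.1, t'.2.1, g) := by ext <;> simp [hc2]
          rw [this, h', hedge.1, hedge.2]
        · exfalso; rw [← hedge.1, ← hedge.2] at hB2; exact hnBG _ hB2 hG1
        · exfalso; rw [← hedge.1, ← hedge.2] at hG2; exact hnBG _ hB1 hG2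
        · have : t = (t.1, t.2.1, b) := by ext <;> simp [hc1]
          have h' : t' = (t'.1, t'.2.1, b) := by ext <;> simp [hc2]
          rw [this, h', hedge.1, hedge.2]
      have hk1' : ∀ t ∈ S', ∀ t' ∈ S', t.1 = t'.1 → t = t' := by
        intro t ht t' ht' h
        exact hsamedge t ht t' ht'
          (by rw [hM'V _ ht.2 _ ht'.2 (Or.inl h)])
      have hk2' : ∀ t ∈ S', ∀ t' ∈ S', t.2.1 = t'.2.1 → t = t' := by
        intro t ht t' ht' h
        exact hsamedge t ht t' ht'
          (by rw [hM'V _ ht.2 _ ht'.2 (Or.inr h)])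
      have hSS' : S ⊆ S' := by
        intro t ht
        exact ⟨hSsub ht, hMM' ((hform _ ht).2 ▸ ht)⟩
      have hS'S : S' = S := hmax S' hS'sub hk1' hk2' hSS'
      ext e
      simp only [Set.mem_setOf_eq]
      constructor
      · intro he
        have heE : e ∈ E := hM'E he
        rw [hpart] at heE
        rcases heE with hB | hG
        · exfalso
          apply hnob
          refine ⟨e.1, e.2, ?_⟩
          rw [← hS'S]
          exact ⟨Or.inr ⟨hB, rfl⟩, he⟩
        · have : (e.1, e.2, g) ∈ S' := ⟨Or.inl ⟨hG, rfl⟩, he⟩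
          rwa [hS'S] at this
      · intro he
        exact hMM' he
  · rintro ⟨M, hME, hMV, hMB, hMmax⟩
    have hMG : ∀ e ∈ M, e ∈ G := by
      intro e he
      have : e ∈ E := hME he
      rw [hpart] at this
      rcases this with hB | hG
      · exfalso
        have : e ∈ M ∩ B := ⟨he, hB⟩
        rw [hMB] at this
        exact this
      · exact hG
    refine ⟨{t : L × R × γ | (t.1, t.2.1) ∈ M ∧ t.2.2 = g}, ?_, ?_, ?_, ?_, ?_⟩
    · intro t ht
      exact Or.inl ⟨hMG _ ht.1, ht.2⟩
    · intro t ht t' ht' h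
      have hedge : (t.1, t.2.1) = (t'.1, t'.2.1) := hMV _ ht.1 _ ht'.1 (Or.inl h)
      ext
      · exact h
      · exact (Prod.ext_iff.mp hedge).2
      · rw [ht.2, ht'.2]
    · intro t ht t' ht' h
      have hedge : (t.1, t.2.1) = (t'.1, t'.2.1) := hMV _ ht.1 _ ht'.1 (Or.inr h)
      ext
      · exact (Prod.ext_iff.mp hedge).1
      · exact h
      · rw [ht.2, ht'.2]
    · intro S' hS'sub hk1' hk2' hSS'
      set M'' : Set (L × R) := {e | ∃ c, (e.1, e.2, c) ∈ S'} with hM''def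
      have hM''E : M'' ⊆ E := by
        rintro e ⟨c, hc⟩
        rcases hS'sub hc with ⟨hG, _⟩ | ⟨hB, _⟩
        · rw [hpart]; exact Or.inr hG
        · rw [hpart]; exact Or.inl hB
      have hM''V : IsVMatching M'' := by
        rintro e ⟨c, hc⟩ e' ⟨c', hc'⟩ hshare
        have h : ((e.1, e.2, c) : L × R × γ) = (e'.1, e'.2, c') := by
          rcases hshare with h | h
          · exact hk1' _ hc _ hc' h
          · exact hk2' _ hc _ hc' h
        have h' := Prod.ext_iff.mp h
        exact Prod.ext h'.1 (Prod.ext_iff.mp h'.2).1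
      have hMM'' : M ⊆ M'' := by
        intro e he
        exact ⟨g, hSS' ⟨he, rfl⟩⟩
      have hM''M : M'' = M := hMmax M'' hM''E hM''V hMM''
      ext t
      simp only [Set.mem_setOf_eq]
      constructor
      · intro ht
        have hedge : (t.1, t.2.1) ∈ M := by
          rw [← hM''M]; exact ⟨t.2.2, ht⟩
        refine ⟨hedge, ?_⟩
        rcases hS'sub ht with ⟨_, hc⟩ | ⟨hB, _⟩
        · exact hc
        · exact absurd (hMG _ hedge) (fun hg => hnBG _ hB hg)
      · intro ht
        exact hSS' ht
    · rintro ⟨x, y, hxy⟩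
      exact hgb hxy.2.symm
end

section
/- Let 𝒢 = ⟨V₁, V₂, V₃, S, E⟩ be an instance of the maximal spoiled-free problem and let a be a fresh constant. Define a database instance with three relations: P = {a} (unary), Q = {(a, s) : s ∈ S} (binary), and R = E (ternary). Call a subinstance (P', Q', R') with P' ⊆ P, Q' ⊆ Q, R' ⊆ R consistent if: (i) any two distinct triangles of R' differ in all three coordinates (each of R₁, R₂, R₃ is a key of R); (ii) any two tuples of Q' with equal first components are equal (Q₁ is a key of Q); (iii) for every x ∈ P' there is some tuple (x, s) ∈ Q' (foreign key P[W] ⊆ Q[Q₁]); and (iv) for every (x, s) ∈ Q', s occurs as the first coordinate of some triangle of R' (foreign key Q[Q₂] ⊆ R[R₁]). A repair is a componentwise-maximal consistent subinstance. Then 𝒢 has the maximal spoiled-free property if and only if there exists a repair (P', Q', R') with a ∉ P', i.e., if and only if the ground query P(a) is not true in every repair. (This is the core of the theorem that computing consistent query answers is co-NP-hard for key FDs together with an acyclic set of primary foreign key constraints, even for a ground atomic query.) -/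
/-- `T` is a set of disjoint triangles: no two distinct triangles of `T` agree on the
first, the second, or the third coordinate. -/
def IsDisjTriangles {α β γ : Type*} (T : Set (α × β × γ)) : Prop :=
  ∀ t ∈ T, ∀ t' ∈ T, (t.1 = t'.1 ∨ t.2.1 = t'.2.1 ∨ t.2.2 = t'.2.2) → t = t'

/-- The instance `⟨V₁, V₂, V₃, S, E⟩` of the maximal spoiled-free problem has the
maximal spoiled-free property. -/
def MaxSpoiledFree {α β γ : Type*} (S : Set α) (E : Set (α × β × γ)) : Prop :=
  ∃ T ⊆ E, IsDisjTriangles T ∧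
    (∀ T' ⊆ E, IsDisjTriangles T' → T ⊆ T' → T' = T) ∧
    ∀ t ∈ T, t.1 ∉ S

/-- The subinstance `(P', Q', R')` is consistent: each of `R₁, R₂, R₃` is a key of `R'`,
`Q₁` is a key of `Q'`, and the foreign key constraints `P[W] ⊆ Q[Q₁]` and
`Q[Q₂] ⊆ R[R₁]` hold. -/
def Cons8 {α β γ δ : Type*} (P' : Set δ) (Q' : Set (δ × α)) (R' : Set (α × β × γ)) :
    Prop :=
  IsDisjTriangles R' ∧
  (∀ u ∈ Q', ∀ u' ∈ Q', u.1 = u'.1 → u = u') ∧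
  (∀ x ∈ P', ∃ u ∈ Q', u.1 = x) ∧
  (∀ u ∈ Q', ∃ t ∈ R', t.1 = u.2)

/-- An instance `𝒢 = ⟨V₁, V₂, V₃, S, E⟩` of the maximal spoiled-free problem has the
maximal spoiled-free property iff the database instance `P = {a}`, `Q = {(a,s) : s ∈ S}`,
`R = E` has a repair `(P', Q', R')` with `a ∉ P'`. -/
theorem stmt_8 {α β γ δ : Type*} [Finite α] [Finite β] [Finite γ]
    (S : Set α) (E : Set (α × β × γ)) (a : δ) :
    MaxSpoiledFree S E ↔
      ∃ (P' : Set δ) (Q' : Set (δ × α)) (R' : Set (α × β × γ)),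
        P' ⊆ {a} ∧ Q' ⊆ {u | u.1 = a ∧ u.2 ∈ S} ∧ R' ⊆ E ∧
        Cons8 P' Q' R' ∧
        (∀ (P'' : Set δ) (Q'' : Set (δ × α)) (R'' : Set (α × β × γ)),
          P'' ⊆ {a} → Q'' ⊆ {u | u.1 = a ∧ u.2 ∈ S} → R'' ⊆ E → Cons8 P'' Q'' R'' →
          P' ⊆ P'' → Q' ⊆ Q'' → R' ⊆ R'' → P'' = P' ∧ Q'' = Q' ∧ R'' = R') ∧
        a ∉ P' := by
  constructor
  · rintro ⟨T, hTE, hTd, hTmax, hTfree⟩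
    refine ⟨∅, ∅, T, by simp, by simp, hTE,
      ⟨hTd, by simp, by simp, by simp⟩, ?_, by simp⟩
    intro P'' Q'' R'' hP hQ hR hC _ _ hTR
    have hRT : R'' = T := hTmax R'' hR hC.1 hTR
    have hQe : Q'' = ∅ := by
      ext u; simp only [Set.mem_empty_iff_false, iff_false]
      intro hu
      obtain ⟨t, ht, hteq⟩ := hC.2.2.2 u hu
      exact hTfree t (hRT ▸ ht) (hteq ▸ (hQ hu).2)
    have hPe : P'' = ∅ := by
      ext x; simp only [Set.mem_empty_iff_false, iff_false]
      intro hx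
      obtain ⟨u, hu, _⟩ := hC.2.2.1 x hx
      simp [hQe] at hu
    exact ⟨hPe, hQe, hRT⟩
  · rintro ⟨P', Q', R', hP, hQ, hR, hC, hmax, ha⟩
    have hPe : P' = ∅ := by
      ext x; simp only [Set.mem_empty_iff_false, iff_false]
      intro hx; have hxa := hP hx; simp only [Set.mem_singleton_iff] at hxa
      subst hxa; exact ha hx
    have hQe : Q' = ∅ := by
      by_contra h
      obtain ⟨u, hu⟩ := Set.nonempty_iff_ne_empty.mpr h
      have hcons : Cons8 ({a} : Set δ) Q' R' := by
        refine ⟨hC.1, hC.2.1, ?_, hC.2.2.2⟩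
        intro x hx; simp only [Set.mem_singleton_iff] at hx; subst hx
        exact ⟨u, hu, (hQ hu).1⟩
      have hm := hmax {a} Q' R' subset_rfl hQ hR hcons (by simp [hPe])
        subset_rfl subset_rfl
      exact ha (hm.1 ▸ Set.mem_singleton a)
    refine ⟨R', hR, hC.1, ?_, ?_⟩
    · intro T' hT' hd hsub
      exact (hmax ∅ ∅ T' (by simp) (by simp) hT' ⟨hd, by simp, by simp, by simp⟩
        (by simp [hPe]) (by simp [hQe]) hsub).2.2
    · intro t ht hts
      have hcons : Cons8 (∅ : Set δ) ({(a, t.1)} : Set (δ × α)) R' := by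
        refine ⟨hC.1, ?_, by simp, ?_⟩
        · intro u hu u' hu' _
          simp only [Set.mem_singleton_iff] at hu hu'; rw [hu, hu']
        · intro u hu; simp only [Set.mem_singleton_iff] at hu; subst hu
          exact ⟨t, ht, rfl⟩
      have hm := hmax ∅ {(a, t.1)} R' (by simp) (by simp [hts]) hR hcons
        (by simp [hPe]) (by simp [hQe]) subset_rfl
      have : ((a, t.1) : δ × α) ∈ Q' := hm.2.1 ▸ Set.mem_singleton _
      simp [hQe] at this
end

section
/- Let Φ = φ₁ ∧ … ∧ φ_m (m ≥ 1) be a CNF formula over propositional variables, with clause indices taken modulo m. Define the instance r_Φ of a 4-ary relation R to contain the tuple (p, 0, i, i+1 mod m) whenever variable p occurs negatively in clause φ_i, and the tuple (p, 1, i, i+1 mod m) whenever p occurs positively in φ_i. Call a subset S ⊆ r_Φ consistent with respect to the FD A₁ → A₂ and the IND A₃ ⊆ A₄ if: (i) any two tuples of S agreeing on the first component agree on the second component, and (ii) every value occurring as the third component of a tuple of S also occurs as the fourth component of some tuple of S. Then Φ is satisfiable if and only if there exists a nonempty consistent subset of r_Φ; equivalently, the empty set is a repair of r_Φ with respect to these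 two constraints if and only if Φ is not satisfiable. (This is the core of the theorem that repair checking is co-NP-hard already for a single functional dependency together with a single inclusion dependency.) -/
/-- The instance `r_Φ`: tuples `(p, false, i, i+1 mod m)` whenever the variable `p`
occurs negatively in clause `φ_i`, and `(p, true, i, i+1 mod m)` whenever `p` occurs
positively in `φ_i`. -/
def cnfInstance {ν : Type*} (m : ℕ) [NeZero m] (posIn negIn : ν → Fin m → Prop) :
    Set (ν × Bool × Fin m × Fin m) :=
  {t | (negIn t.1 t.2.2.1 ∧ t.2.1 = false ∧ t.2.2.2 = t.2.2.1 + 1) ∨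
       (posIn t.1 t.2.2.1 ∧ t.2.1 = true ∧ t.2.2.2 = t.2.2.1 + 1)}

/-- `S` is consistent with respect to the FD `A₁ → A₂` and the IND `A₃ ⊆ A₄`:
any two tuples agreeing on the first component agree on the second, and every value
occurring as a third component occurs as a fourth component of some tuple. -/
def ConsFDIND {ν : Type*} {m : ℕ} (S : Set (ν × Bool × Fin m × Fin m)) : Prop :=
  (∀ t ∈ S, ∀ t' ∈ S, t.1 = t'.1 → t.2.1 = t'.2.1) ∧
  (∀ t ∈ S, ∃ t' ∈ S, t'.2.2.2 = t.2.2.1)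

open Classical Fin.NatCast Fin.CommRing in
theorem stmt_9_main {ν : Type*} (m : ℕ) [NeZero m] (posIn negIn : ν → Fin m → Prop) :
    (∃ σ : ν → Bool, ∀ i : Fin m,
        ∃ p, (posIn p i ∧ σ p = true) ∨ (negIn p i ∧ σ p = false)) ↔
      ∃ S : Set (ν × Bool × Fin m × Fin m),
        S ⊆ cnfInstance m posIn negIn ∧ S ≠ ∅ ∧ ConsFDIND S := by
  constructor
  · rintro ⟨σ, hσ⟩
    choose p hp using hσ
    refine ⟨Set.range (fun i => (p i, σ (p i), i, i + 1)), ?_, ?_, ?_, ?_⟩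
    · rintro t ⟨i, rfl⟩
      rcases hp i with ⟨h1, h2⟩ | ⟨h1, h2⟩
      · exact Or.inr ⟨h1, h2, rfl⟩
      · exact Or.inl ⟨h1, h2, rfl⟩
    · have : Nonempty (Fin m) := ⟨0⟩
      exact (Set.range_nonempty _).ne_empty
    · rintro t ⟨i, rfl⟩ t' ⟨j, rfl⟩ h
      simp only at h ⊢
      rw [h]
    · rintro t ⟨i, rfl⟩
      exact ⟨(p (i - 1), σ (p (i - 1)), i - 1, (i - 1) + 1), ⟨i - 1, rfl⟩, by
        simp [sub_add_cancel]⟩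
  · rintro ⟨S, hsub, hne, hFD, hIND⟩
    -- every clause index appears as a third component
    obtain ⟨t₀, ht₀⟩ := Set.nonempty_iff_ne_empty.2 hne
    have key : ∀ k : ℕ, ∃ t ∈ S, t.2.2.1 = t₀.2.2.1 - (k : Fin m) := by
      intro k
      induction k with
      | zero => exact ⟨t₀, ht₀, by simp⟩
      | succ n ih =>
        obtain ⟨t, htS, ht⟩ := ih
        obtain ⟨t', ht'S, ht'⟩ := hIND t htS
        refine ⟨t', ht'S, ?_⟩
        have h4 : t'.2.2.2 = t'.2.2.1 + 1 := by
          rcases hsub ht'S with ⟨_, _, h⟩ | ⟨_, _, h⟩ <;> exact h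
        have : t'.2.2.1 + 1 = t₀.2.2.1 - (n : Fin m) := by rw [← h4, ht', ht]
        have h5 : t'.2.2.1 = t₀.2.2.1 - (n : Fin m) - 1 := by
          rw [← this]; ring
        rw [h5]
        push_cast
        ring
    have cover : ∀ j : Fin m, ∃ t ∈ S, t.2.2.1 = j := by
      intro j
      obtain ⟨t, htS, ht⟩ := key ((t₀.2.2.1 - j).val)
      refine ⟨t, htS, ?_⟩
      rw [ht, Fin.cast_val_eq_self, sub_sub_cancel]
    refine ⟨fun p => decide (∃ t ∈ S, t.1 = p ∧ t.2.1 = true), fun i => ?_⟩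
    obtain ⟨t, htS, ht⟩ := cover i
    rcases hsub htS with ⟨h1, h2, _⟩ | ⟨h1, h2, _⟩
    · refine ⟨t.1, Or.inr ⟨ht ▸ h1, ?_⟩⟩
      simp only [decide_eq_false_iff_not]
      rintro ⟨t', ht'S, ht'1, ht'2⟩
      have := hFD t htS t' ht'S ht'1.symm
      rw [h2, ht'2] at this
      exact Bool.false_ne_true this
    · refine ⟨t.1, Or.inl ⟨ht ▸ h1, ?_⟩⟩
      simp only [decide_eq_true_eq]
      exact ⟨t, htS, rfl, h2⟩

/-- A CNF formula `Φ` with `m ≥ 1` clauses is satisfiable iff there is a nonempty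
consistent subset of `r_Φ`; equivalently, the empty set is a repair of `r_Φ` with
respect to the FD and the IND iff `Φ` is not satisfiable. -/
theorem stmt_9 {ν : Type*} (m : ℕ) [NeZero m] (posIn negIn : ν → Fin m → Prop) :
    ((∃ σ : ν → Bool, ∀ i : Fin m,
        ∃ p, (posIn p i ∧ σ p = true) ∨ (negIn p i ∧ σ p = false)) ↔
      ∃ S : Set (ν × Bool × Fin m × Fin m),
        S ⊆ cnfInstance m posIn negIn ∧ S ≠ ∅ ∧ ConsFDIND S) ∧
    ((ConsFDIND (∅ : Set (ν × Bool × Fin m × Fin m)) ∧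
        ∀ S : Set (ν × Bool × Fin m × Fin m),
          S ⊆ cnfInstance m posIn negIn → ConsFDIND S → (∅ : Set _) ⊆ S → S = ∅) ↔
      ¬ ∃ σ : ν → Bool, ∀ i : Fin m,
        ∃ p, (posIn p i ∧ σ p = true) ∨ (negIn p i ∧ σ p = false)) := by
  have main := stmt_9_main m posIn negIn
  refine ⟨main, ?_⟩
  constructor
  · rintro ⟨_, hmax⟩ hsat
    obtain ⟨S, h1, h2, h3⟩ := main.1 hsat
    exact h2 (hmax S h1 h3 (Set.empty_subset S))
  · intro hns
    refine ⟨⟨fun t ht => absurd ht (Set.notMem_empty t),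
            fun t ht => absurd ht (Set.notMem_empty t)⟩, fun S h1 h2 _ => ?_⟩
    by_contra hne
    exact hns (main.2 ⟨S, h1, hne, h2⟩)
end

section
/- Consider a database with two relations: a finite binary relation p ⊆ α × β constrained by the key functional dependency stating that any two tuples of p agreeing on their first component are equal, and a finite unary relation q ⊆ α constrained by the foreign key constraint q ⊆ π₁(p), where π₁(p) denotes the set of first components of tuples of p. Call a pair (p', q') with p' ⊆ p and q' ⊆ q consistent if p' satisfies the key FD and q' ⊆ π₁(p'); a repair of (p, q) is a componentwise-maximal consistent pair. Then (p'', q'') is a repair of (p, q) with respect to both constraints if and only if p'' is a maximal subset of p satisfying the key FD and q'' = q ∩ π₁(p). (This instantiates the lemma that, for key FDs and foreign key constraints with at most one key per relation, the repairs of an instance r with respect to all the constraints are exactly the repairs, with respect to the FDs alone, of the unique repair of r with respect to the foreign key constraints alone.) -/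
theorem aux_fst_10 {α β : Type*} (p p'' : Set (α × β)) (hpp : p'' ⊆ p)
    (hfd : ∀ t ∈ p'', ∀ t' ∈ p'', t.1 = t'.1 → t = t')
    (hpmax : ∀ p' : Set (α × β), p' ⊆ p →
      (∀ t ∈ p', ∀ t' ∈ p', t.1 = t'.1 → t = t') → p'' ⊆ p' → p' = p'') :
    Prod.fst '' p'' = Prod.fst '' p := by
  apply Set.Subset.antisymm (Set.image_mono (f := Prod.fst) hpp)
  rintro a ⟨⟨a', b⟩, hab, rfl⟩
  by_contra h
  have hfd' : ∀ t ∈ insert (a', b) p'', ∀ t' ∈ insert (a', b) p'',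
      t.1 = t'.1 → t = t' := by
    intro t ht t' ht' he
    rcases Set.mem_insert_iff.1 ht with rfl | ht <;>
      rcases Set.mem_insert_iff.1 ht' with rfl | ht'
    · rfl
    · exact absurd ⟨t', ht', he.symm⟩ h
    · exact absurd ⟨t, ht, he⟩ h
    · exact hfd t ht t' ht' he
  have heq := hpmax (insert (a', b) p'') (Set.insert_subset hab hpp) hfd'
    (Set.subset_insert _ _)
  exact h ⟨(a', b), heq ▸ Set.mem_insert _ _, rfl⟩

/-- For a finite binary relation `p` with key FD on the first component and a finite
unary relation `q` with the foreign key constraint `q ⊆ π₁(p)`: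
`(p'', q'')` is a repair of `(p, q)` with respect to both constraints iff `p''` is a
maximal FD-satisfying subset of `p` and `q'' = q ∩ π₁(p)`. -/
theorem stmt_10 {α β : Type*} (p : Set (α × β)) (q : Set α)
    (hp : p.Finite) (hq : q.Finite) (p'' : Set (α × β)) (q'' : Set α) :
    (p'' ⊆ p ∧ q'' ⊆ q ∧
      (∀ t ∈ p'', ∀ t' ∈ p'', t.1 = t'.1 → t = t') ∧ q'' ⊆ Prod.fst '' p'' ∧
      (∀ (p' : Set (α × β)) (q' : Set α), p' ⊆ p → q' ⊆ q →
        (∀ t ∈ p', ∀ t' ∈ p', t.1 = t'.1 → t = t') → q' ⊆ Prod.fst '' p' →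
        p'' ⊆ p' → q'' ⊆ q' → p' = p'' ∧ q' = q'')) ↔
    (p'' ⊆ p ∧ (∀ t ∈ p'', ∀ t' ∈ p'', t.1 = t'.1 → t = t') ∧
      (∀ p' : Set (α × β), p' ⊆ p → (∀ t ∈ p', ∀ t' ∈ p', t.1 = t'.1 → t = t') →
        p'' ⊆ p' → p' = p'') ∧
      q'' = q ∩ Prod.fst '' p) := by
  constructor
  · rintro ⟨hpp, hqq, hfd, hfk, hmax⟩
    have hpmax : ∀ p' : Set (α × β), p' ⊆ p →
        (∀ t ∈ p', ∀ t' ∈ p', t.1 = t'.1 → t = t') → p'' ⊆ p' → p' = p'' := by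
      intro p' hp' hfd' hsub
      exact (hmax p' (q ∩ Prod.fst '' p') hp' Set.inter_subset_left hfd'
        Set.inter_subset_right hsub
        (fun a ha => ⟨hqq ha, Set.image_mono (f := Prod.fst) hsub (hfk ha)⟩)).1
    have hfst := aux_fst_10 p p'' hpp hfd hpmax
    have hq'' : q ∩ Prod.fst '' p'' = q'' :=
      (hmax p'' (q ∩ Prod.fst '' p'') hpp Set.inter_subset_left hfd
        Set.inter_subset_right subset_rfl (fun a ha => ⟨hqq ha, hfk ha⟩)).2
    exact ⟨hpp, hfd, hpmax, by rw [← hq'', hfst]⟩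
  · rintro ⟨hpp, hfd, hpmax, rfl⟩
    have hfst := aux_fst_10 p p'' hpp hfd hpmax
    refine ⟨hpp, Set.inter_subset_left, hfd,
      by rw [hfst]; exact Set.inter_subset_right, ?_⟩
    intro p' q' hp' hq' hfd' hfk' hsubp hsubq
    have hpe : p' = p'' := hpmax p' hp' hfd' hsubp
    refine ⟨hpe, Set.Subset.antisymm ?_ hsubq⟩
    intro a ha
    exact ⟨hq' ha, hfst ▸ (hpe ▸ hfk' ha : a ∈ Prod.fst '' p'')⟩
end

section
/- Consider a database with two finite binary relations p ⊆ α × β and q ⊆ β × γ, constrained by the cyclic set of inclusion dependencies {p[2] ⊆ q[1], q[2] ⊆ p[1]}: a pair (p', q') with p' ⊆ p, q' ⊆ q is consistent if every second component of a tuple of p' occurs as the first component of some tuple of q', and every second component... of q' occurs as the first component of some tuple of p'. Then the collection of consistent pairs is closed under componentwise union, and consequently (p, q) has exactly one repair, namely the componentwise union of all consistent pairs (p', q') with p' ⊆ p and q' ⊆ q. (This instantiates the proposition that, for any set of inclusion dependencies alone, every instance has a unique repair, so both repair checking and consistent query answering are tractable.) -/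
/-- `(p', q')` is a consistent pair for the cyclic set of inclusion dependencies
`{p[2] ⊆ q[1], q[2] ⊆ p[1]}`: `p' ⊆ p`, `q' ⊆ q`, every second component of a tuple of
`p'` occurs as the first component of some tuple of `q'`, and every second component of
a tuple of `q'` occurs as the first component of some tuple of `p'`. -/
def ConsIND {α β : Type*} (p : Set (α × β)) (q : Set (β × α))
    (p' : Set (α × β)) (q' : Set (β × α)) : Prop :=
  p' ⊆ p ∧ q' ⊆ q ∧ (∀ t ∈ p', ∃ u ∈ q', u.1 = t.2) ∧ (∀ u ∈ q', ∃ t ∈ p', t.1 = u.2)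

lemma consIND_union {α β : Type*} (p : Set (α × β)) (q : Set (β × α)) :
    ConsIND p q {t | ∃ p' q', ConsIND p q p' q' ∧ t ∈ p'}
      {u | ∃ p' q', ConsIND p q p' q' ∧ u ∈ q'} := by
  refine ⟨?_, ?_, ?_, ?_⟩
  · rintro t ⟨p', q', h, ht⟩; exact h.1 ht
  · rintro u ⟨p', q', h, hu⟩; exact h.2.1 hu
  · rintro t ⟨p', q', h, ht⟩
    obtain ⟨u, hu, he⟩ := h.2.2.1 t ht
    exact ⟨u, ⟨p', q', h, hu⟩, he⟩
  · rintro u ⟨p', q', h, hu⟩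
    obtain ⟨t, ht, he⟩ := h.2.2.2 u hu
    exact ⟨t, ⟨p', q', h, ht⟩, he⟩

/-- For two finite binary relations constrained by the cyclic INDs
`{p[2] ⊆ q[1], q[2] ⊆ p[1]}`: the consistent pairs are closed under componentwise
union, and `(p, q)` has exactly one repair, namely the componentwise union of all
consistent pairs. -/
theorem stmt_12 {α β : Type*} (p : Set (α × β)) (q : Set (β × α))
    (hp : p.Finite) (hq : q.Finite) :
    (∀ p₁ q₁ p₂ q₂, ConsIND p q p₁ q₁ → ConsIND p q p₂ q₂ →
      ConsIND p q (p₁ ∪ p₂) (q₁ ∪ q₂)) ∧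
    (∀ (p'' : Set (α × β)) (q'' : Set (β × α)),
      (ConsIND p q p'' q'' ∧
        ∀ p' q', ConsIND p q p' q' → p'' ⊆ p' → q'' ⊆ q' → p' = p'' ∧ q' = q'') ↔
      (p'' = {t | ∃ p' q', ConsIND p q p' q' ∧ t ∈ p'} ∧
       q'' = {u | ∃ p' q', ConsIND p q p' q' ∧ u ∈ q'})) := by
  constructor
  · rintro p₁ q₁ p₂ q₂ h₁ h₂
    refine ⟨Set.union_subset h₁.1 h₂.1, Set.union_subset h₁.2.1 h₂.2.1, ?_, ?_⟩
    · rintro t (ht | ht)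
      · obtain ⟨u, hu, he⟩ := h₁.2.2.1 t ht; exact ⟨u, Or.inl hu, he⟩
      · obtain ⟨u, hu, he⟩ := h₂.2.2.1 t ht; exact ⟨u, Or.inr hu, he⟩
    · rintro u (hu | hu)
      · obtain ⟨t, ht, he⟩ := h₁.2.2.2 u hu; exact ⟨t, Or.inl ht, he⟩
      · obtain ⟨t, ht, he⟩ := h₂.2.2.2 u hu; exact ⟨t, Or.inr ht, he⟩
  · intro p'' q''
    constructor
    · rintro ⟨hc, hmax⟩
      have hsubp : p'' ⊆ {t | ∃ p' q', ConsIND p q p' q' ∧ t ∈ p'} :=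
        fun t ht => ⟨p'', q'', hc, ht⟩
      have hsubq : q'' ⊆ {u | ∃ p' q', ConsIND p q p' q' ∧ u ∈ q'} :=
        fun u hu => ⟨p'', q'', hc, hu⟩
      obtain ⟨h1, h2⟩ := hmax _ _ (consIND_union p q) hsubp hsubq
      exact ⟨h1.symm, h2.symm⟩
    · rintro ⟨rfl, rfl⟩
      refine ⟨consIND_union p q, fun p' q' h hp' hq' => ?_⟩
      constructor
      · exact subset_antisymm (fun t ht => ⟨p', q', h, ht⟩) hp'
      · exact subset_antisymm (fun u hu => ⟨p', q', h, hu⟩) hq'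
end

section
/- Consider a database with two finite binary relations p ⊆ α × β and q ⊆ γ × α, constrained by: a functional dependency on p (any two tuples of p' agreeing on the first component agree on the second), a functional dependency on q (likewise), and the acyclic inclusion dependency q[2] ⊆ p[1] (every second component of a tuple of q' occurs as the first component of some tuple of p'). Call (p', q') with p' ⊆ p, q' ⊆ q consistent if all three constraints hold. Then (p', q') is a repair of (p, q) if and only if (p', q') is consistent and locally maximal, i.e., for every tuple t ∈ p \ p' the pair (p' ∪ {t}, q') is inconsistent and for every tuple t ∈ q \ q' the pair (p', q' ∪ {t}) is inconsistent. (This local-maximality characterization is the correctness core of the polynomial-time repair-checking algorithm for functional dependencies together with an acyclic set of inclusion dependencies.) -/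
/-- `(p', q')` is consistent: the FD on `p'` (tuples agreeing on the first component
agree on the second), the FD on `q'`, and the inclusion dependency `q[2] ⊆ p[1]`
(every second component of a tuple of `q'` occurs as the first component of some tuple
of `p'`). -/
def ConsFDAcyc {α β γ : Type*} (p' : Set (α × β)) (q' : Set (γ × α)) : Prop :=
  (∀ t ∈ p', ∀ t' ∈ p', t.1 = t'.1 → t.2 = t'.2) ∧
  (∀ u ∈ q', ∀ u' ∈ q', u.1 = u'.1 → u.2 = u'.2) ∧
  (∀ u ∈ q', ∃ t ∈ p', t.1 = u.2)

/-- For finite binary relations `p ⊆ α × β`, `q ⊆ γ × α` constrained by an FD on each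
relation and the acyclic IND `q[2] ⊆ p[1]`: `(p', q')` is a repair of `(p, q)` iff it
is consistent and locally maximal (adding any single tuple of `p \ p'` or of `q \ q'`
makes it inconsistent). -/
theorem stmt_13 {α β γ : Type*} (p : Set (α × β)) (q : Set (γ × α))
    (hp : p.Finite) (hq : q.Finite)
    (p' : Set (α × β)) (q' : Set (γ × α)) (hp' : p' ⊆ p) (hq' : q' ⊆ q) :
    (ConsFDAcyc p' q' ∧
      ∀ (p'' : Set (α × β)) (q'' : Set (γ × α)), p'' ⊆ p → q'' ⊆ q →
        ConsFDAcyc p'' q'' → p' ⊆ p'' → q' ⊆ q'' → p'' = p' ∧ q'' = q') ↔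
    (ConsFDAcyc p' q' ∧
      (∀ t ∈ p, t ∉ p' → ¬ ConsFDAcyc (insert t p') q') ∧
      (∀ u ∈ q, u ∉ q' → ¬ ConsFDAcyc p' (insert u q'))) := by
  constructor
  · rintro ⟨hcons, hmax⟩
    refine ⟨hcons, ?_, ?_⟩
    · intro t ht htn hc
      have := (hmax (insert t p') q' (Set.insert_subset ht hp') hq' hc
        (Set.subset_insert _ _) subset_rfl).1
      exact htn (this ▸ Set.mem_insert t p')
    · intro u hu hun hc
      have := (hmax p' (insert u q') hp' (Set.insert_subset hu hq') hc
        subset_rfl (Set.subset_insert _ _)).2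
      exact hun (this ▸ Set.mem_insert u q')
  · rintro ⟨hcons, hlp, hlq⟩
    refine ⟨hcons, ?_⟩
    intro p'' q'' hp'' hq'' hc'' hpp hqq
    obtain ⟨hfp'', hfq'', hind''⟩ := hc''
    obtain ⟨hfp, hfq, hind⟩ := hcons
    have hpe : p'' = p' := by
      refine Set.Subset.antisymm ?_ hpp
      intro t ht
      by_contra htn
      refine hlp t (hp'' ht) htn ⟨?_, hfq, ?_⟩
      · intro a ha b hb
        exact hfp'' a (Set.insert_subset ht hpp ha) b (Set.insert_subset ht hpp hb)
      · intro u hu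
        obtain ⟨t', ht', he⟩ := hind u hu
        exact ⟨t', Set.mem_insert_of_mem _ ht', he⟩
    refine ⟨hpe, ?_⟩
    refine Set.Subset.antisymm ?_ hqq
    intro u hu
    by_contra hun
    refine hlq u (hq'' hu) hun ⟨hfp, ?_, ?_⟩
    · intro a ha b hb
      exact hfq'' a (Set.insert_subset hu hqq ha) b (Set.insert_subset hu hqq hb)
    · intro u' hu'
      obtain ⟨t, ht, he⟩ := hind'' u' (Set.insert_subset hu hqq hu')
      exact ⟨t, hpe ▸ ht, he⟩
end

section
/- Let Φ = φ₁ ∧ … ∧ φ_m be a CNF formula over the variables p₁,…,p_m (the number of variables equals the number m of clauses), in which every clause is a sequence of at most 3 literals and every variable occurs at most 3 times in Φ. Let s : {1,2,3} × {1,2,3} × {1,…,m} → {1,…,m} be any function such that: for each pair (i, j), s(i, j, ·) is a permutation of {1,…,m}; and s(i, j, l) = n whenever the variable p_l occurs (positively or negatively) in clause φ_{n+1} (clause indices modulo m) as the i-th variable of that clause and this occurrence is the j-th occurrence of p_l in Φ. Define a database instance r_Φ with ten binary relations: R = {(w, φ_n) : w is a literal occurring in clause φ_n}, and, for each i, j ∈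 {1,2,3}, R_{i,j} = {(p_l, φ_{s(i,j,l)}), (¬p_l, φ_{s(i,j,l)}) : 1 ≤ l ≤ m}, where the literals p_l and ¬p_l are distinct domain elements. Call a subinstance (R', R'_{1,1},…,R'_{3,3}) consistent if: any two tuples of R' agreeing on the second component are equal (the key FD B → A on R); for each (i, j), any two tuples of R'_{i,j} agreeing on the first component are equal and any two agreeing on the second component are equal (the key FDs A_{i,j} → B_{i,j} and B_{i,j} → A_{i,j}); and for each (i, j), every second component of a tuple of R'_{i,j} occurs as a second component of a tuple of R' (inclusion B_{i,j} ⊆ B) and every first component of a tuple of R' occurs as a first component of a tuple of R'_{i,j} (inclusion A ⊆ A_{i,j}). Then the empty subinstance is a repair of r_Φ with respect to these constraints if and only if Φ is not satisfiable; equivalently, there exists a nonempty consistent subinstance of r_Φ if and only if Φ is satisfiable. (This is the core of the theorem that repair checking is co-NP-hard for key functional dependencies together with foreign key constraints.) -/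
/-- The list of occurrences of the variable `l` in the formula `Φ` whose clauses are
`C 0, …, C (m-1)` (each clause a list of literals, a literal being a pair
(variable, sign)): the occurrences are the pairs (clause index, position in the clause),
listed in the order of clauses and, within a clause, in the order of positions. -/
def occList (m : ℕ) (C : Fin m → List (Fin m × Bool)) (l : Fin m) :
    List (Fin m × ℕ) :=
  (List.finRange m).flatMap fun j =>
    ((C j).zipIdx.map Prod.swap).filterMap fun q => if q.2.1 = l then some (j, q.1) else none

/-- The relation `R = {(w, φ_n) : w is a literal occurring in clause φ_n}`. -/
def Rrel (m : ℕ) (C : Fin m → List (Fin m × Bool)) :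
    Set ((Fin m × Bool) × Fin m) :=
  {t | t.1 ∈ C t.2}

/-- The relation `R_{i,j} = {(p_l, φ_{s(i,j,l)}), (¬p_l, φ_{s(i,j,l)}) : 1 ≤ l ≤ m}`. -/
def Rijrel (m : ℕ) (s : Fin 3 → Fin 3 → Fin m → Fin m) (i j : Fin 3) :
    Set ((Fin m × Bool) × Fin m) :=
  {t | t.2 = s i j t.1.1}

/-- The subinstance `(R', R'_{1,1}, …, R'_{3,3})` is consistent: the key FD `B → A` on
`R'`; for each `(i,j)` the key FDs `A_{i,j} → B_{i,j}` and `B_{i,j} → A_{i,j}` on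
`R'_{i,j}`; and for each `(i,j)` the inclusion dependencies `B_{i,j} ⊆ B` and
`A ⊆ A_{i,j}`. -/
def Cons14 (m : ℕ) (R' : Set ((Fin m × Bool) × Fin m))
    (Rij' : Fin 3 → Fin 3 → Set ((Fin m × Bool) × Fin m)) : Prop :=
  (∀ t ∈ R', ∀ t' ∈ R', t.2 = t'.2 → t = t') ∧
  (∀ i j, ∀ t ∈ Rij' i j, ∀ t' ∈ Rij' i j, (t.1 = t'.1 ∨ t.2 = t'.2) → t = t') ∧
  (∀ i j, ∀ t ∈ Rij' i j, ∃ u ∈ R', u.2 = t.2) ∧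
  (∀ i j, ∀ u ∈ R', ∃ t ∈ Rij' i j, t.1 = u.1)

lemma occ_find (m : ℕ) [NeZero m] (C : Fin m → List (Fin m × Bool))
    (hlen : ∀ j, (C j).length ≤ 3) (hocc : ∀ l, (occList m C l).length ≤ 3)
    (s : Fin 3 → Fin 3 → Fin m → Fin m)
    (hs : ∀ (i j : Fin 3) (l jc : Fin m) (ip : ℕ),
      (occList m C l)[(j : ℕ)]? = some (jc, ip) → ip = (i : ℕ) → s i j l = jc - 1)
    (n : Fin m) (w : Fin m × Bool) (hw : w ∈ C n) :
    ∃ i j : Fin 3, s i j w.1 = n - 1 := by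
  obtain ⟨ip, hip, hget⟩ := List.mem_iff_getElem.mp hw
  have henum : (ip, w) ∈ (C n).zipIdx.map Prod.swap := by
    refine List.mem_map.mpr ⟨(w, ip), ?_, rfl⟩
    rw [List.mk_mem_zipIdx_iff_getElem?]
    exact (List.getElem?_eq_getElem hip).trans (by rw [hget])
  have hmem : ((n, ip) : Fin m × ℕ) ∈ occList m C w.1 := by
    rw [occList, List.mem_flatMap]
    exact ⟨n, List.mem_finRange n, List.mem_filterMap.mpr ⟨(ip, w), henum, by simp⟩⟩
  obtain ⟨k, hklt, hkgetE⟩ := List.mem_iff_getElem.mp hmem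
  have hkget : (occList m C w.1)[k]? = some (n, ip) :=
    (List.getElem?_eq_getElem hklt).trans (by rw [hkgetE])
  refine ⟨⟨ip, lt_of_lt_of_le hip (hlen n)⟩, ⟨k, lt_of_lt_of_le hklt (hocc w.1)⟩, ?_⟩
  exact hs _ _ w.1 n ip hkget rfl

open Fin.NatCast in
lemma main_equiv (m : ℕ) [NeZero m] (C : Fin m → List (Fin m × Bool))
    (hlen : ∀ j, (C j).length ≤ 3) (hocc : ∀ l, (occList m C l).length ≤ 3)
    (s : Fin 3 → Fin 3 → Fin m → Fin m) (hperm : ∀ i j, Function.Bijective (s i j))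
    (hs : ∀ (i j : Fin 3) (l jc : Fin m) (ip : ℕ),
      (occList m C l)[(j : ℕ)]? = some (jc, ip) → ip = (i : ℕ) → s i j l = jc - 1) :
    (∃ (R' : Set ((Fin m × Bool) × Fin m))
        (Rij' : Fin 3 → Fin 3 → Set ((Fin m × Bool) × Fin m)),
        R' ⊆ Rrel m C ∧ (∀ i j, Rij' i j ⊆ Rijrel m s i j) ∧ Cons14 m R' Rij' ∧
        (R' ≠ ∅ ∨ ∃ i j, Rij' i j ≠ ∅)) ↔
      ∃ σ : Fin m → Bool, ∀ j, ∃ w ∈ C j, σ w.1 = w.2 := by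
  classical
  constructor
  · rintro ⟨R', Rij', hR, hRij, ⟨fd1, fd2, inc1, inc2⟩, hne⟩
    -- propagation step
    have step : ∀ n : Fin m, (∃ t ∈ R', t.2 = n) → ∃ t ∈ R', t.2 = n - 1 := by
      rintro n ⟨t, ht, ht2⟩
      have hw : t.1 ∈ C n := by
        have := hR ht; rw [Rrel, Set.mem_setOf_eq, ht2] at this; exact this
      obtain ⟨i, j, hsij⟩ := occ_find m C hlen hocc s hs n t.1 hw
      obtain ⟨t', ht', ht'1⟩ := inc2 i j t ht
      have ht'2 : t'.2 = s i j t.1.1 := by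
        have h := hRij i j ht'; rw [Rijrel, Set.mem_setOf_eq] at h
        rw [h, ht'1]
      obtain ⟨u, hu, hu2⟩ := inc1 i j t' ht'
      exact ⟨u, hu, by rw [hu2, ht'2, hsij]⟩
    -- some clause is represented
    have hP0 : ∃ n₀ : Fin m, ∃ t ∈ R', t.2 = n₀ := by
      rcases hne with h | ⟨i, j, h⟩
      · obtain ⟨t, ht⟩ := Set.nonempty_iff_ne_empty.mpr h
        exact ⟨t.2, t, ht, rfl⟩
      · obtain ⟨t, ht⟩ := Set.nonempty_iff_ne_empty.mpr h
        obtain ⟨u, hu, hu2⟩ := inc1 i j t ht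
        exact ⟨u.2, u, hu, rfl⟩
    obtain ⟨n₀, hn₀⟩ := hP0
    -- all clauses are represented
    have hall : ∀ n : Fin m, ∃ t ∈ R', t.2 = n := by
      have hk : ∀ k : ℕ, ∃ t ∈ R', t.2 = n₀ - (k : Fin m) := by
        intro k
        induction k with
        | zero => simpa using hn₀
        | succ k ih =>
            obtain ⟨t, ht, ht2⟩ := step _ ih
            refine ⟨t, ht, ?_⟩
            rw [ht2]; push_cast; rw [sub_sub]
      intro n
      obtain ⟨t, ht, ht2⟩ := hk (n₀ - n).val
      refine ⟨t, ht, ?_⟩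
      rw [ht2, Fin.cast_val_eq_self, sub_sub_cancel]
    -- sign uniqueness
    have sign_unique : ∀ a ∈ R', ∀ b ∈ R', a.1.1 = b.1.1 → a.1 = b.1 := by
      intro a ha b hb hab
      obtain ⟨ta, hta, hta1⟩ := inc2 0 0 a ha
      obtain ⟨tb, htb, htb1⟩ := inc2 0 0 b hb
      have h2a := hRij 0 0 hta
      have h2b := hRij 0 0 htb
      rw [Rijrel, Set.mem_setOf_eq] at h2a h2b
      have : ta = tb := by
        refine fd2 0 0 ta hta tb htb (Or.inr ?_)
        rw [h2a, h2b, hta1, htb1, hab]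
      rw [← hta1, this, htb1]
    choose wt hwt hwt2 using hall
    refine ⟨fun l => if ∃ n, ((l, true), n) ∈ R' then true else false, fun j => ?_⟩
    have hwC : (wt j).1 ∈ C j := by
      have := hR (hwt j); rw [Rrel, Set.mem_setOf_eq, hwt2 j] at this; exact this
    refine ⟨(wt j).1, hwC, ?_⟩
    show (if ∃ n, (((wt j).1.1, true), n) ∈ R' then true else false) = (wt j).1.2
    by_cases hex : ∃ n, (((wt j).1.1, true), n) ∈ R'
    · rw [if_pos hex]
      obtain ⟨n, hn⟩ := hex
      have h := sign_unique _ hn _ (hwt j) rfl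
      exact congrArg Prod.snd h
    · rw [if_neg hex]
      cases hb2 : (wt j).1.2 with
      | false => rfl
      | true =>
          exfalso
          apply hex
          refine ⟨(wt j).2, ?_⟩
          have : (((wt j).1.1, true) : Fin m × Bool) = (wt j).1 := by
            rw [← hb2]
          rw [this]
          exact hwt j
  · rintro ⟨σ, hσ⟩
    choose w hw hσw using hσ
    have hm : 0 < m := Nat.pos_of_ne_zero (NeZero.ne m)
    refine ⟨Set.range (fun j : Fin m => (w j, j)),
      fun i j => Set.range (fun l : Fin m => ((l, σ l), s i j l)), ?_, ?_, ?_, ?_⟩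
    · rintro t ⟨j, rfl⟩
      exact hw j
    · rintro i j t ⟨l, rfl⟩
      rfl
    · refine ⟨?_, ?_, ?_, ?_⟩
      · rintro t ⟨j, rfl⟩ t' ⟨j', rfl⟩ h
        simp only at h
        rw [h]
      · rintro i j t ⟨l, rfl⟩ t' ⟨l', rfl⟩ h
        simp only [Prod.mk.injEq] at h
        have : l = l' := by
          rcases h with ⟨h1, _⟩ | h2
          · exact h1
          · exact (hperm i j).injective h2
        rw [this]
      · rintro i j t ⟨l, rfl⟩
        exact ⟨(w (s i j l), s i j l), ⟨s i j l, rfl⟩, rfl⟩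
      · rintro i j u ⟨jc, rfl⟩
        refine ⟨(((w jc).1, σ (w jc).1), s i j (w jc).1), ⟨(w jc).1, rfl⟩, ?_⟩
        simp only
        rw [hσw jc]
    · left
      apply Set.nonempty_iff_ne_empty.mp
      exact ⟨(w ⟨0, hm⟩, ⟨0, hm⟩), ⟨0, hm⟩, rfl⟩

/-- Let `Φ = φ₁ ∧ … ∧ φ_m` be a CNF formula over the variables `p₁, …, p_m` (as many
variables as clauses) in which every clause is a sequence of at most `3` literals and
every variable occurs at most `3` times, and let `s` be any function such that
`s(i,j,·)` is a permutation of the clause indices for each `(i,j)` and `s(i,j,l) = n`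
whenever `p_l` occurs in clause `φ_{n+1}` (indices mod `m`) as the `i`-th variable of
that clause and this is the `j`-th occurrence of `p_l` in `Φ`. Then the empty
subinstance is a repair of `r_Φ` with respect to the key FDs and foreign key
constraints iff `Φ` is not satisfiable; equivalently, there is a nonempty consistent
subinstance of `r_Φ` iff `Φ` is satisfiable. -/
theorem stmt_14 (m : ℕ) [NeZero m] (C : Fin m → List (Fin m × Bool))
    (hlen : ∀ j, (C j).length ≤ 3) (hocc : ∀ l, (occList m C l).length ≤ 3)
    (s : Fin 3 → Fin 3 → Fin m → Fin m) (hperm : ∀ i j, Function.Bijective (s i j))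
    (hs : ∀ (i j : Fin 3) (l jc : Fin m) (ip : ℕ),
      (occList m C l)[(j : ℕ)]? = some (jc, ip) → ip = (i : ℕ) → s i j l = jc - 1) :
    ((Cons14 m ∅ (fun _ _ => ∅) ∧
        ∀ (R' : Set ((Fin m × Bool) × Fin m))
          (Rij' : Fin 3 → Fin 3 → Set ((Fin m × Bool) × Fin m)),
          R' ⊆ Rrel m C → (∀ i j, Rij' i j ⊆ Rijrel m s i j) → Cons14 m R' Rij' →
          R' = ∅ ∧ ∀ i j, Rij' i j = ∅) ↔
      ¬ ∃ σ : Fin m → Bool, ∀ j, ∃ w ∈ C j, σ w.1 = w.2) ∧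
    ((∃ (R' : Set ((Fin m × Bool) × Fin m))
        (Rij' : Fin 3 → Fin 3 → Set ((Fin m × Bool) × Fin m)),
        R' ⊆ Rrel m C ∧ (∀ i j, Rij' i j ⊆ Rijrel m s i j) ∧ Cons14 m R' Rij' ∧
        (R' ≠ ∅ ∨ ∃ i j, Rij' i j ≠ ∅)) ↔
      ∃ σ : Fin m → Bool, ∀ j, ∃ w ∈ C j, σ w.1 = w.2) := by
  have main := main_equiv m C hlen hocc s hperm hs
  constructor
  · constructor
    · rintro ⟨_, hall⟩ hsat
      obtain ⟨R', Rij', h1, h2, h3, hne⟩ := main.mpr hsat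
      obtain ⟨he, hall'⟩ := hall R' Rij' h1 h2 h3
      rcases hne with h | ⟨i, j, h⟩
      · exact h he
      · exact h (hall' i j)
    · intro hns
      have hce : Cons14 m (∅ : Set ((Fin m × Bool) × Fin m)) (fun _ _ => ∅) := by
        refine ⟨?_, ?_, ?_, ?_⟩ <;> intros <;> simp_all
      refine ⟨hce, ?_⟩
      intro R' Rij' h1 h2 h3
      by_contra h
      rcases not_and_or.mp h with h | h
      · exact hns (main.mp ⟨R', Rij', h1, h2, h3, Or.inl h⟩)
      · push_neg at h
        obtain ⟨i, j, hij⟩ := h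
        exact hns (main.mp ⟨R', Rij', h1, h2, h3,
          Or.inr ⟨i, j, Set.nonempty_iff_ne_empty.mp hij⟩⟩)
  · exact main
end
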